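/- Let F: ℕ → ℂ have all P-smooth Wintner coefficients Win^{(P)}_q F = ∑_{d P-smooth, q | d} F'(d)/d for all primes P and all q. Then for every a ∈ ℕ and every prime P ≥ a, F(a) = ∑_{q P-smooth} (Win^{(P)}_q F) c_q(a), where the sum over q is finite. -/

import Mathlib

open scoped BigOperators Classical
open Filter

/-- `n` is `P`-smooth: every prime factor of `n` is at most `P`. -/
def IsSmooth (P n : ℕ) : Prop := ∀ p : ℕ, p.Prime → p ∣ n → p ≤ P

/-- The Ramanujan sum `c_q(a)`, via Kluyver's formula. -/
noncomputable def ramanujanSum (q a : ℕ) : ℤ :=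
  ∑ d ∈ (Nat.gcd a q).divisors, (d : ℤ) * ArithmeticFunction.moebius (q / d)

/-- The Eratosthenes transform `F' = F ∗ μ`. -/
noncomputable def eratosthenes (F : ℕ → ℂ) (d : ℕ) : ℂ :=
  ∑ e ∈ d.divisors, (ArithmeticFunction.moebius (d / e) : ℂ) * F e

/-!
Swap the order of summation in a truncation of `∑_q (Win_q F) c_q(a)`. Since
`c_q(a) = ∑_{e ∣ (a, q)} e μ(q/e)`, Möbius inversion gives `∑_{q ∣ d} c_q(a) = d·[d ∣ a]`, so the
truncation collapses to `∑_{d ∣ a} F'(d) = F(a)`; every divisor of `a` is `P`-smooth because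
`a ≤ P`. The sum over `q` is finite by the vertical-limit property: if `c_q(a) ≠ 0` then
`v_p(q) ≤ v_p(a) + 1`, so a `P`-smooth such `q` divides `a · P#`. Hence only finitely many
Wintner coefficients enter, and the truncations converge to the full sum.
-/

open ArithmeticFunction ArithmeticFunction.Moebius

lemma IsSmooth.of_dvd {P m n : ℕ} (h : IsSmooth P n) (hmn : m ∣ n) : IsSmooth P m :=
  fun p hp hpm => h p hp (hpm.trans hmn)

lemma isSmooth_of_le {P n : ℕ} (hn : n ≠ 0) (hnP : n ≤ P) : IsSmooth P n :=
  fun _ _ hpn => (Nat.le_of_dvd (Nat.pos_of_ne_zero hn) hpn).trans hnP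

lemma sum_divisors_eratosthenes (F : ℕ → ℂ) {a : ℕ} (ha : a ≠ 0) :
    ∑ d ∈ a.divisors, eratosthenes F d = F a := by
  refine (sum_eq_iff_sum_mul_moebius_eq (f := eratosthenes F) (g := F)).mpr (fun n _ => ?_) a
    (Nat.pos_of_ne_zero ha)
  rw [Nat.sum_divisorsAntidiagonal' (f := fun x y => (μ x : ℂ) * F y)]
  rfl

noncomputable def idOnDivisors (a : ℕ) : ArithmeticFunction ℤ :=
  ⟨fun e => if e ≠ 0 ∧ e ∣ a then (e : ℤ) else 0, by simp⟩

lemma ramanujanSum_eq_idOnDivisors_mul_moebius (a : ℕ) {q : ℕ} (hq : q ≠ 0) :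
    ramanujanSum q a = (idOnDivisors a * μ) q := by
  have hdiv : (a.gcd q).divisors = q.divisors.filter (· ∣ a) := by
    ext e
    simp only [Nat.mem_divisors, Finset.mem_filter, Nat.dvd_gcd_iff, ne_eq, Nat.gcd_eq_zero_iff, hq,
      and_false, not_false_eq_true, and_true]
    exact and_comm
  rw [mul_apply, Nat.sum_divisorsAntidiagonal (f := fun x y => idOnDivisors a x * (μ y : ℤ)),
    ramanujanSum, hdiv, Finset.sum_filter]
  refine Finset.sum_congr rfl fun e he => ?_
  by_cases h : e ∣ a <;> simp [idOnDivisors, h, (Nat.pos_of_mem_divisors he).ne']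

lemma sum_divisors_ramanujanSum (a : ℕ) {d : ℕ} (hd : d ≠ 0) :
    ∑ q ∈ d.divisors, ramanujanSum q a = if d ∣ a then (d : ℤ) else 0 := by
  rw [Finset.sum_congr rfl fun q hq =>
      ramanujanSum_eq_idOnDivisors_mul_moebius a (Nat.pos_of_mem_divisors hq).ne',
    ← coe_mul_zeta_apply, mul_assoc, moebius_mul_coe_zeta, mul_one]
  simp [idOnDivisors, hd]

lemma factorization_le_of_ramanujanSum_ne_zero {a q : ℕ} (ha : a ≠ 0)
    (h : ramanujanSum q a ≠ 0) (p : ℕ) : q.factorization p ≤ a.factorization p + 1 := by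
  obtain ⟨e, he, hμ⟩ := Finset.exists_ne_zero_of_sum_ne_zero h
  have hea : e ∣ a := (Nat.dvd_of_mem_divisors he).trans (Nat.gcd_dvd_left a q)
  have heq : e ∣ q := (Nat.dvd_of_mem_divisors he).trans (Nat.gcd_dvd_right a q)
  have hsq : Squarefree (q / e) := moebius_ne_zero_iff_squarefree.mp (right_ne_zero_of_mul hμ)
  have h1 : e.factorization p ≤ a.factorization p :=
    (Nat.factorization_le_iff_dvd (ne_zero_of_dvd_ne_zero ha hea) ha).mpr hea p
  have h2 := hsq.natFactorization_le_one p
  rw [Nat.factorization_div heq, Finsupp.tsub_apply] at h2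
  omega

lemma dvd_mul_primorial_of_ramanujanSum_ne_zero {a q P : ℕ} (ha : a ≠ 0) (hq : q ≠ 0)
    (hs : IsSmooth P q) (h : ramanujanSum q a ≠ 0) : q ∣ a * primorial P := by
  refine (Nat.factorization_prime_le_iff_dvd hq (mul_ne_zero ha (primorial_ne_zero P))).mp
    fun p hp => ?_
  rw [Nat.factorization_mul ha (primorial_ne_zero P), Finsupp.add_apply]
  by_cases hpq : p ∣ q
  · have : 0 < (primorial P).factorization p :=
      hp.factorization_pos_of_dvd (primorial_ne_zero P)
        ((Nat.Prime.dvd_primorial_iff hp).mpr (hs p hp hpq))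
    have := factorization_le_of_ramanujanSum_ne_zero ha h p
    omega
  · simp [Nat.factorization_eq_zero_of_not_dvd hpq]

lemma support_smooth_mul_ramanujanSum_subset {a : ℕ} (ha : a ≠ 0) (P : ℕ) (W : ℕ → ℂ) :
    Function.support
        (fun q => if 0 < q ∧ IsSmooth P q then W q * (ramanujanSum q a : ℂ) else 0) ⊆
      ((a * primorial P).divisors : Set ℕ) := by
  intro q hq
  by_cases hc : 0 < q ∧ IsSmooth P q
  · have hr : ramanujanSum q a ≠ 0 := by
      rintro hr
      simp [hc, hr] at hq
    exact Nat.mem_divisors.mpr ⟨dvd_mul_primorial_of_ramanujanSum_ne_zero ha hc.1.ne' hc.2 hr,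
      mul_ne_zero ha (primorial_ne_zero P)⟩
  · simp [hc] at hq

lemma sum_filter_dvd_ramanujanSum {a d P : ℕ} (ha : a ≠ 0) (hd : d ≠ 0) (hsd : IsSmooth P d) :
    ∑ q ∈ (a * primorial P).divisors with q ∣ d, ramanujanSum q a
      = if d ∣ a then (d : ℤ) else 0 := by
  rw [← sum_divisors_ramanujanSum a hd]
  refine Finset.sum_subset (fun q hq => Nat.mem_divisors.mpr ⟨(Finset.mem_filter.mp hq).2, hd⟩)
    fun q hq hq' => ?_
  by_contra hr
  have hqd := Nat.dvd_of_mem_divisors hq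
  exact hq' (Finset.mem_filter.mpr ⟨Nat.mem_divisors.mpr
    ⟨dvd_mul_primorial_of_ramanujanSum_ne_zero ha (Nat.pos_of_mem_divisors hq).ne'
      (hsd.of_dvd hqd) hr, mul_ne_zero ha (primorial_ne_zero P)⟩, hqd⟩)

noncomputable def partialWintner (F : ℕ → ℂ) (P q x : ℕ) : ℂ :=
  ∑ d ∈ Finset.Icc 1 x, if IsSmooth P d ∧ q ∣ d then eratosthenes F d / d else 0

lemma sum_smooth_partialWintner_mul (F : ℕ → ℂ) (P x : ℕ) (S : Finset ℕ) (c : ℕ → ℂ) :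
    ∑ q ∈ S, (if 0 < q ∧ IsSmooth P q then partialWintner F P q x * c q else 0)
      = ∑ d ∈ Finset.Icc 1 x,
          if IsSmooth P d then eratosthenes F d / d * ∑ q ∈ S with q ∣ d, c q else 0 := by
  have hterm : ∀ q, (if 0 < q ∧ IsSmooth P q then partialWintner F P q x * c q else 0)
      = ∑ d ∈ Finset.Icc 1 x, if IsSmooth P d ∧ q ∣ d then eratosthenes F d / d * c q else 0 := by
    intro q
    by_cases hq : 0 < q ∧ IsSmooth P q
    · rw [if_pos hq, partialWintner, Finset.sum_mul]
      simp only [ite_mul, zero_mul]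
    · refine (if_neg hq).trans (Finset.sum_eq_zero fun d hd => if_neg ?_).symm
      rintro ⟨hsd, hqd⟩
      exact hq ⟨Nat.pos_of_dvd_of_pos hqd (Finset.mem_Icc.mp hd).1, hsd.of_dvd hqd⟩
  rw [Finset.sum_congr rfl fun q _ => hterm q, Finset.sum_comm]
  refine Finset.sum_congr rfl fun d _ => ?_
  by_cases hsd : IsSmooth P d
  · simp only [hsd, true_and, if_true, Finset.mul_sum, Finset.sum_filter, mul_ite, mul_zero]
  · simp only [hsd, false_and, if_false, Finset.sum_const_zero]

lemma sum_smooth_partialWintner_mul_ramanujanSum (F : ℕ → ℂ) {a P x : ℕ} (ha : a ≠ 0)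
    (haP : a ≤ P) (hax : a ≤ x) :
    ∑ q ∈ (a * primorial P).divisors,
        (if 0 < q ∧ IsSmooth P q then partialWintner F P q x * (ramanujanSum q a : ℂ) else 0)
      = F a := by
  rw [sum_smooth_partialWintner_mul, ← sum_divisors_eratosthenes F ha]
  have hdivisors : a.divisors = (Finset.Icc 1 x).filter (· ∣ a) := by
    ext d
    simp only [Nat.mem_divisors, Finset.mem_filter, Finset.mem_Icc]
    constructor
    · rintro ⟨hda, -⟩
      exact ⟨⟨Nat.pos_of_dvd_of_pos hda (Nat.pos_of_ne_zero ha), (Nat.le_of_dvd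
        (Nat.pos_of_ne_zero ha) hda).trans hax⟩, hda⟩
    · rintro ⟨-, hda⟩
      exact ⟨hda, ha⟩
  rw [hdivisors, Finset.sum_filter]
  refine Finset.sum_congr rfl fun d hd => ?_
  have hd0 : d ≠ 0 := Nat.one_le_iff_ne_zero.mp (Finset.mem_Icc.mp hd).1
  by_cases hsd : IsSmooth P d
  · rw [if_pos hsd, ← Int.cast_sum, sum_filter_dvd_ramanujanSum ha hd0 hsd]
    split_ifs <;> simp [hd0]
  · have hda : ¬ d ∣ a := fun hda =>
      hsd (isSmooth_of_le hd0 ((Nat.le_of_dvd (Nat.pos_of_ne_zero ha) hda).trans haP))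
    rw [if_neg hsd, if_neg hda]

/-- If all `P`-smooth Wintner coefficients
`Wp P q = ∑_{d P-smooth, q | d} F'(d)/d` exist, then for every `a ≥ 1` and
every prime `P ≥ a`, `F(a) = ∑_{q P-smooth} (Win^{(P)}_q F) c_q(a)`, and this
sum over `q` has finite support. -/
theorem stmt11 (F : ℕ → ℂ) (Wp : ℕ → ℕ → ℂ)
    (hWp : ∀ P : ℕ, P.Prime → ∀ q : ℕ, 0 < q →
      Tendsto
        (fun x : ℕ =>
          ∑ d ∈ Finset.Icc 1 x, if IsSmooth P d ∧ q ∣ d then eratosthenes F d / d else 0)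
        atTop (nhds (Wp P q)))
    (a : ℕ) (ha : 0 < a) (P : ℕ) (hP : P.Prime) (haP : a ≤ P) :
    {q : ℕ | (if 0 < q ∧ IsSmooth P q then Wp P q * (ramanujanSum q a : ℂ) else 0) ≠ 0}.Finite ∧
      F a = ∑' q : ℕ, if 0 < q ∧ IsSmooth P q then Wp P q * (ramanujanSum q a : ℂ) else 0 := by
  have hsupp := support_smooth_mul_ramanujanSum_subset ha.ne' P (Wp P)
  refine ⟨(Finset.finite_toSet _).subset hsupp, ?_⟩
  rw [tsum_eq_sum' hsupp]
  have hlim : Tendsto (fun x => ∑ q ∈ (a * primorial P).divisors,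
        (if 0 < q ∧ IsSmooth P q then partialWintner F P q x * (ramanujanSum q a : ℂ) else 0))
      atTop (nhds (∑ q ∈ (a * primorial P).divisors,
        (if 0 < q ∧ IsSmooth P q then Wp P q * (ramanujanSum q a : ℂ) else 0))) := by
    refine tendsto_finsetSum _ fun q _ => ?_
    by_cases hq : 0 < q ∧ IsSmooth P q
    · simp only [if_pos hq]
      exact (hWp P hP q hq.1).mul_const _
    · simp only [if_neg hq]
      exact tendsto_const_nhds
  refine tendsto_nhds_unique (tendsto_const_nhds.congr' ?_) hlim
  filter_upwards [eventually_ge_atTop a] with x hax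
  exact (sum_smooth_partialWintner_mul_ramanujanSum F ha.ne' haP hax).symm
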